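/- Let M be a separable normed L^0(m)-module and (v_n)_{n∈ℕ} a countable dense subset. Let M_n be the closed submodule generated by {v_1,…,v_n}, and let ι_n : M_n ↪ M and ι_{nm} : M_n ↪ M_m (n ≤ m) be the inclusions. Then (M, {ι_n}) is the direct limit of the direct system ({M_n}, {ι_{nm}}) of finitely generated normed L^0(m)-modules. -/

import Mathlib

open MeasureTheory Filter

noncomputable section

variable {X : Type*} [MeasurableSpace X]

/-- `L⁰(μ)`: real-valued functions up to `μ`-a.e. equality, as a commutative ring. -/
instance L0.instCommRing {μ : Measure X} : CommRing (X →ₘ[μ] ℝ) where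
  __ : AddCommGroup (X →ₘ[μ] ℝ) := inferInstance
  __ : CommMonoid (X →ₘ[μ] ℝ) := inferInstance
  left_distrib a b c := AEEqFun.toGerm_injective <| by
    simp only [AEEqFun.mul_toGerm, AEEqFun.add_toGerm]; ring
  right_distrib a b c := AEEqFun.toGerm_injective <| by
    simp only [AEEqFun.mul_toGerm, AEEqFun.add_toGerm]; ring
  zero_mul a := AEEqFun.toGerm_injective <| by
    simp only [AEEqFun.mul_toGerm, AEEqFun.zero_toGerm]; ring
  mul_zero a := AEEqFun.toGerm_injective <| by
    simp only [AEEqFun.mul_toGerm, AEEqFun.zero_toGerm]; ring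

/-- A pointwise seminorm on an `L⁰(μ)`-module, with values in `L⁰(μ)`
(ordered by the `μ`-a.e. order). -/
structure PtwiseSeminorm (μ : Measure X) (M : Type*) [AddCommGroup M]
    [Module (X →ₘ[μ] ℝ) M] where
  pn : M → X →ₘ[μ] ℝ
  nonneg : ∀ v, 0 ≤ pn v
  add_le : ∀ v w, pn (v + w) ≤ pn v + pn w
  smul_eq : ∀ (f : X →ₘ[μ] ℝ) (v : M), pn (f • v) = |f| * pn v

/-- A pointwise seminorm is a pointwise norm if `|v| = 0` a.e. implies `v = 0`. -/
def PtwiseSeminorm.IsNorm {μ : Measure X} {M : Type*} [AddCommGroup M]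
    [Module (X →ₘ[μ] ℝ) M] (N : PtwiseSeminorm μ M) : Prop :=
  ∀ v, N.pn v = 0 → v = 0

/-- The distance `d(v,w) = ∫ min(|v-w|,1) dm'` associated with a pointwise
(semi)norm `pnorm` (with subtraction `sub`). -/
def pd {μ : Measure X} (m' : Measure X) {M : Type*}
    (pnorm : M → X →ₘ[μ] ℝ) (sub : M → M → M) (v w : M) : ℝ :=
  ∫ x, min ((pnorm (sub v w)) x) 1 ∂m'

/-- Sequential continuity with respect to two distance functions. -/
def SeqCont {A B : Type*} (dA : A → A → ℝ) (dB : B → B → ℝ) (f : A → B) : Prop :=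
  ∀ (u : ℕ → A) (a : A), Tendsto (fun n => dA (u n) a) atTop (nhds 0) →
    Tendsto (fun n => dB (f (u n)) (f a)) atTop (nhds 0)

/-- Completeness with respect to a distance function. -/
def CompleteWith {A : Type*} (d : A → A → ℝ) : Prop :=
  ∀ u : ℕ → A, (∀ ε > 0, ∃ k, ∀ n ≥ k, ∀ p ≥ k, d (u n) (u p) < ε) →
    ∃ a, Tendsto (fun n => d (u n) a) atTop (nhds 0)

/-- A normed `L⁰(μ)`-module: an `L⁰(μ)`-module with a pointwise norm that is
complete for the induced distance (via the auxiliary probability measure `m'`). -/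
structure NormedL0Module (μ m' : Measure X) where
  carrier : Type*
  ag : AddCommGroup carrier
  mo : Module (X →ₘ[μ] ℝ) carrier
  pn : carrier → X →ₘ[μ] ℝ
  pn_nonneg : ∀ v, 0 ≤ pn v
  pn_add_le : ∀ v w, pn (v + w) ≤ pn v + pn w
  pn_smul : ∀ (f : X →ₘ[μ] ℝ) v, pn (f • v) = |f| * pn v
  pn_eq_zero : ∀ v, pn v = 0 → v = 0
  complete : CompleteWith (pd m' pn (fun a b => a - b))

attribute [instance] NormedL0Module.ag NormedL0Module.mo

variable {μ m' : Measure X}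

/-- A morphism of normed `L⁰(μ)`-modules: `L⁰`-linear with `|φ(v)| ≤ |v|` a.e. -/
structure NMHom (M N : NormedL0Module μ m') where
  toFun : M.carrier → N.carrier
  map_add' : ∀ v w, toFun (v + w) = toFun v + toFun w
  map_smul' : ∀ (f : X →ₘ[μ] ℝ) v, toFun (f • v) = f • toFun v
  bound' : ∀ v, N.pn (toFun v) ≤ M.pn v

/-- The identity morphism. -/
def NMHom.id (M : NormedL0Module μ m') : NMHom M M :=
  ⟨fun v => v, fun _ _ => rfl, fun _ _ => rfl, fun _ => le_rfl⟩

/-- A direct system of normed `L⁰(μ)`-modules over a preordered index set. -/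
structure DirSystem (μ m' : Measure X) (I : Type*) [Preorder I] where
  obj : I → NormedL0Module.{_, u_3} μ m'
  map : ∀ i j, i ≤ j → NMHom (obj i) (obj j)
  map_self : ∀ i v, (map i i le_rfl).toFun v = v
  map_comp : ∀ i j k (hij : i ≤ j) (hjk : j ≤ k) v,
    (map j k hjk).toFun ((map i j hij).toFun v) = (map i k (hij.trans hjk)).toFun v

/-- An inverse system of normed `L⁰(μ)`-modules over a preordered index set. -/
structure InvSystem (μ m' : Measure X) (I : Type*) [Preorder I] where
  obj : I → NormedL0Module.{_, u_3} μ m'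
  map : ∀ i j, i ≤ j → NMHom (obj j) (obj i)
  map_self : ∀ i v, (map i i le_rfl).toFun v = v
  map_comp : ∀ i j k (hij : i ≤ j) (hjk : j ≤ k) v,
    (map i j hij).toFun ((map j k hjk).toFun v) = (map i k (hij.trans hjk)).toFun v

/-- `(L, ι)` is a direct limit of the system `(obj, map)`: it is a target and
every target factors uniquely through it. -/
structure IsDirectLimit {I : Type*} [Preorder I] (obj : I → NormedL0Module μ m')
    (map : ∀ i j, i ≤ j → (obj i).carrier → (obj j).carrier)
    (L : NormedL0Module μ m') (can : ∀ i, NMHom (obj i) L) : Prop where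
  compat : ∀ i j (h : i ≤ j) v, (can j).toFun (map i j h v) = (can i).toFun v
  universal : ∀ (T : NormedL0Module.{_, u_5} μ m') (psi : ∀ i, NMHom (obj i) T),
    (∀ i j (h : i ≤ j) v, (psi j).toFun (map i j h v) = (psi i).toFun v) →
    ∃! F : NMHom L T, ∀ i v, F.toFun ((can i).toFun v) = (psi i).toFun v

/-- `(L, pr)` is an inverse limit of the system `(obj, map)`: it is a cone and
every cone factors uniquely through it. -/
structure IsInverseLimit {I : Type*} [Preorder I] (obj : I → NormedL0Module μ m')
    (map : ∀ i j, i ≤ j → (obj j).carrier → (obj i).carrier)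
    (L : NormedL0Module μ m') (pr : ∀ i, NMHom L (obj i)) : Prop where
  compat : ∀ i j (h : i ≤ j) v, map i j h ((pr j).toFun v) = (pr i).toFun v
  universal : ∀ (T : NormedL0Module.{_, u_5} μ m') (Q : ∀ i, NMHom T (obj i)),
    (∀ i j (h : i ≤ j) w, map i j h ((Q j).toFun w) = (Q i).toFun w) →
    ∃! F : NMHom T L, ∀ i w, (pr i).toFun (F.toFun w) = (Q i).toFun w

/-- A continuous `L⁰(μ)`-linear map between normed `L⁰(μ)`-modules
(an element of `Hom(M,N)`). -/
structure CLM (M N : NormedL0Module μ m') where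
  toFun : M.carrier → N.carrier
  map_add' : ∀ v w, toFun (v + w) = toFun v + toFun w
  map_smul' : ∀ (f : X →ₘ[μ] ℝ) v, toFun (f • v) = f • toFun v
  cont' : SeqCont (pd m' M.pn (fun a b => a - b)) (pd m' N.pn (fun a b => a - b)) toFun

/-- An element of the dual module `M* = Hom(M, L⁰(μ))`. -/
structure DualElem (M : NormedL0Module μ m') where
  toFun : M.carrier → X →ₘ[μ] ℝ
  map_add' : ∀ v w, toFun (v + w) = toFun v + toFun w
  map_smul' : ∀ (f : X →ₘ[μ] ℝ) v, toFun (f • v) = f * toFun v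
  cont' : SeqCont (pd m' M.pn (fun a b => a - b))
    (pd m' (fun g : X →ₘ[μ] ℝ => |g|) (fun a b => a - b)) toFun

/-!
The `M_n` increase and their union contains the dense sequence `v`, so a compatible family
`ψ_n : M_n → T` is one `L⁰`-linear map `ψ` on a dense part of `M` with `|ψ x| ≤ |x|` a.e.;
the theorem reduces to extending such a map uniquely to `M`. The extension `F` is
characterised by `|F w - ψ x| ≤ |w - x|` a.e. for all `x` in the domain of `ψ`:
a value with this property exists as the limit of `ψ x_k` along `x_k → w` (completeness of `T`),
is unique, and the graph of such values is a submodule, which gives linearity. Every inequality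
passes to the limit through: `a ≤ b + g_k` and `∫ min (g_k, 1) dm' → 0` imply `a ≤ b`, because
`m'` and `μ` have the same null sets.
The objects of the direct system must live in an arbitrary universe; `w ↦ (d(w, v_n))_n`
embeds `M` into `ℕ → ℝ`, so `M` is small and each `M_n` is replaced by its `Shrink`.
-/

open Topology

universe u

namespace L0

-- The order of `X →ₘ[μ] ℝ` is lifted from `Germ (ae μ) ℝ`, an ordered ring.
instance instIsOrderedRing : IsOrderedRing (X →ₘ[μ] ℝ) where
  add_le_add_left a b h c := by
    show (a + c).toGerm ≤ (b + c).toGerm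
    rw [AEEqFun.add_toGerm, AEEqFun.add_toGerm]
    exact add_le_add_left (α := Germ _ ℝ) h _
  zero_le_one := by
    show (0 : X →ₘ[μ] ℝ).toGerm ≤ (1 : X →ₘ[μ] ℝ).toGerm
    rw [AEEqFun.zero_toGerm, AEEqFun.one_toGerm]; exact zero_le_one
  mul_le_mul_of_nonneg_left a ha b c h := by
    show (a * b).toGerm ≤ (a * c).toGerm
    rw [AEEqFun.mul_toGerm, AEEqFun.mul_toGerm]
    exact mul_le_mul_of_nonneg_left (α := Germ _ ℝ) h ha
  mul_le_mul_of_nonneg_right a ha b c h := by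
    show (b * a).toGerm ≤ (c * a).toGerm
    rw [AEEqFun.mul_toGerm, AEEqFun.mul_toGerm]
    exact mul_le_mul_of_nonneg_right (α := Germ _ ℝ) h ha

theorem le_iff_ae {f g : X →ₘ[μ] ℝ} : f ≤ g ↔ ∀ᵐ x ∂μ, f x ≤ g x :=
  AEEqFun.coeFn_le.symm

theorem ae_nonneg {g : X →ₘ[μ] ℝ} (hg : 0 ≤ g) : ∀ᵐ x ∂μ, 0 ≤ g x := by
  filter_upwards [le_iff_ae.1 hg, AEEqFun.coeFn_zero (β := ℝ) (μ := μ)] with x h h0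
  rwa [h0] at h

end L0

theorem integrable_min_one {m : Measure X} [IsFiniteMeasure m] {f : X → ℝ}
    (hf : AEStronglyMeasurable f m) (h0 : ∀ᵐ x ∂m, 0 ≤ f x) :
    Integrable (fun x => min (f x) 1) m := by
  refine (integrable_const 1).mono' (hf.inf aestronglyMeasurable_const) ?_
  filter_upwards [h0] with x hx
  rw [Real.norm_of_nonneg (le_min hx zero_le_one)]
  exact min_le_right _ _

theorem min_add_one_le {a b : ℝ} (ha : 0 ≤ a) (hb : 0 ≤ b) :
    min (a + b) 1 ≤ min a 1 + min b 1 := by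
  have ha1 : 0 ≤ min a 1 := le_min ha zero_le_one
  have hb1 : 0 ≤ min b 1 := le_min hb zero_le_one
  rcases le_total a 1 with h1 | h1
  · rcases le_total b 1 with h2 | h2
    · rw [min_eq_left h1, min_eq_left h2]; exact min_le_left _ _
    · rw [min_eq_right h2]; exact (min_le_right _ _).trans (by linarith)
  · rw [min_eq_right h1]; exact (min_le_right _ _).trans (by linarith)

theorem min_mul_one_le {a b R : ℝ} (ha : 0 ≤ a) (hb : 0 ≤ b) (hR : 1 ≤ R) :
    min (a * b) 1 ≤ R * min b 1 + min (a / R) 1 := by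
  have hR0 : 0 ≤ R := by linarith
  have hRb : 0 ≤ R * min b 1 := mul_nonneg hR0 (le_min hb zero_le_one)
  have haR0 : 0 ≤ min (a / R) 1 := le_min (div_nonneg ha hR0) zero_le_one
  rcases le_or_gt a R with haR | haR
  · rcases le_total b 1 with hb1 | hb1
    · rw [min_eq_left hb1]
      nlinarith [min_le_left (a * b) 1]
    · rw [min_eq_right hb1]
      linarith [min_le_right (a * b) 1]
  · rw [min_eq_right ((one_le_div (by linarith)).2 haR.le)]
    linarith [min_le_right (a * b) 1]

def truncIntegral (m' : Measure X) (g : X →ₘ[μ] ℝ) : ℝ :=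
  ∫ x, min (g x) 1 ∂m'

namespace truncIntegral

variable (hac : m' ≪ μ)
include hac

theorem nonneg {g : X →ₘ[μ] ℝ} (hg : 0 ≤ g) : 0 ≤ truncIntegral m' g :=
  integral_nonneg_of_ae <| by
    filter_upwards [hac.ae_le (L0.ae_nonneg hg)] with x hx
    exact le_min hx zero_le_one

variable [IsFiniteMeasure m']

theorem integrable {g : X →ₘ[μ] ℝ} (hg : 0 ≤ g) : Integrable (fun x => min (g x) 1) m' :=
  integrable_min_one (g.aestronglyMeasurable.mono_ac hac) (hac.ae_le (L0.ae_nonneg hg))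

theorem mono {g h : X →ₘ[μ] ℝ} (hg : 0 ≤ g) (hgh : g ≤ h) :
    truncIntegral m' g ≤ truncIntegral m' h := by
  refine integral_mono_ae (integrable hac hg) (integrable hac (hg.trans hgh)) ?_
  filter_upwards [hac.ae_le (L0.le_iff_ae.1 hgh)] with x hx
  exact min_le_min_right 1 hx

theorem add_le {g h : X →ₘ[μ] ℝ} (hg : 0 ≤ g) (hh : 0 ≤ h) :
    truncIntegral m' (g + h) ≤ truncIntegral m' g + truncIntegral m' h := by
  rw [truncIntegral, truncIntegral, truncIntegral,
    ← integral_add (integrable hac hg) (integrable hac hh)]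
  refine integral_mono_ae (integrable hac (add_nonneg hg hh))
    ((integrable hac hg).add (integrable hac hh)) ?_
  filter_upwards [hac.ae_le (L0.ae_nonneg hg), hac.ae_le (L0.ae_nonneg hh),
    hac.ae_le (AEEqFun.coeFn_add g h)] with x hgx hhx hadd
  rw [hadd, Pi.add_apply]
  exact min_add_one_le hgx hhx

theorem eq_zero (hac' : μ ≪ m') {g : X →ₘ[μ] ℝ} (hg : 0 ≤ g) (h : truncIntegral m' g ≤ 0) :
    g = 0 := by
  have hmin : (fun x => min (g x) 1) =ᵐ[m'] 0 :=
    (integral_eq_zero_iff_of_nonneg_ae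
      (by filter_upwards [hac.ae_le (L0.ae_nonneg hg)] with x hx using le_min hx zero_le_one)
      (integrable hac hg)).1 (le_antisymm h (nonneg hac hg))
  refine AEEqFun.ext ?_
  filter_upwards [hac'.ae_le hmin, L0.ae_nonneg hg, AEEqFun.coeFn_zero (β := ℝ) (μ := μ)]
    with x hx hgx h0
  rw [h0, Pi.zero_apply]
  rw [Pi.zero_apply] at hx
  by_contra hne
  exact (lt_min (lt_of_le_of_ne hgx (Ne.symm hne)) zero_lt_one).ne' hx

theorem mul_le {c h : X →ₘ[μ] ℝ} (hc : 0 ≤ c) (hh : 0 ≤ h) {R : ℝ} (hR : 1 ≤ R) :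
    truncIntegral m' (c * h) ≤ R * truncIntegral m' h + ∫ x, min (c x / R) 1 ∂m' := by
  have hcR : Integrable (fun x => min (c x / R) 1) m' :=
    integrable_min_one ((continuous_id.div_const R).comp_aestronglyMeasurable
      (c.aestronglyMeasurable.mono_ac hac))
      (by filter_upwards [hac.ae_le (L0.ae_nonneg hc)] with x hx
          exact div_nonneg hx (by linarith))
  rw [truncIntegral, truncIntegral, ← integral_const_mul,
    ← integral_add ((integrable hac hh).const_mul R) hcR]
  refine integral_mono_ae (integrable hac (mul_nonneg hc hh))
    (((integrable hac hh).const_mul R).add hcR) ?_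
  filter_upwards [hac.ae_le (L0.ae_nonneg hc), hac.ae_le (L0.ae_nonneg hh),
    hac.ae_le (AEEqFun.coeFn_mul c h)] with x hcx hhx hmul
  rw [hmul, Pi.mul_apply]
  exact min_mul_one_le hcx hhx hR

theorem tendsto_integral_min_div {c : X →ₘ[μ] ℝ} (hc : 0 ≤ c) :
    Tendsto (fun n : ℕ => ∫ x, min (c x / (n + 1)) 1 ∂m') atTop (𝓝 0) := by
  have hlim : ∀ x, Tendsto (fun n : ℕ => min (c x / (n + 1)) 1) atTop (𝓝 0) := fun x => by
    simpa [div_eq_mul_inv] using ((tendsto_one_div_add_atTop_nhds_zero_nat.const_mul (c x)).min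
      (tendsto_const_nhds (x := (1 : ℝ))))
  have hbound : ∀ n : ℕ, ∀ᵐ x ∂m', ‖min (c x / (n + 1)) 1‖ ≤ 1 := fun n => by
    filter_upwards [hac.ae_le (L0.ae_nonneg hc)] with x hx
    rw [Real.norm_of_nonneg (le_min (by positivity) zero_le_one)]
    exact min_le_right _ _
  simpa using tendsto_integral_of_dominated_convergence (fun _ => 1)
    (fun n => (continuous_id.div_const _).comp_aestronglyMeasurable
      (c.aestronglyMeasurable.mono_ac hac) |>.inf aestronglyMeasurable_const)
    (integrable_const 1) hbound (Eventually.of_forall hlim)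

theorem tendsto_mul_zero {c : X →ₘ[μ] ℝ} (hc : 0 ≤ c) {h : ℕ → X →ₘ[μ] ℝ} (hh : ∀ k, 0 ≤ h k)
    (hlim : Tendsto (fun k => truncIntegral m' (h k)) atTop (𝓝 0)) :
    Tendsto (fun k => truncIntegral m' (c * h k)) atTop (𝓝 0) := by
  refine tendsto_order.2 ⟨fun a ha => Eventually.of_forall fun k =>
    ha.trans_le (nonneg hac (mul_nonneg hc (hh k))), fun ε hε => ?_⟩
  obtain ⟨n, hn⟩ :=
    ((tendsto_integral_min_div hac hc).eventually (gt_mem_nhds (half_pos hε))).exists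
  have hR : (1 : ℝ) ≤ n + 1 := by linarith [n.cast_nonneg (α := ℝ)]
  have hlimR := hlim.const_mul ((n : ℝ) + 1)
  rw [mul_zero] at hlimR
  filter_upwards [hlimR.eventually (gt_mem_nhds (half_pos hε))] with k hk
  linarith [mul_le hac hc (hh k) hR]

theorem tendsto_add_zero {g h : ℕ → X →ₘ[μ] ℝ} (hg : ∀ k, 0 ≤ g k) (hh : ∀ k, 0 ≤ h k)
    (hglim : Tendsto (fun k => truncIntegral m' (g k)) atTop (𝓝 0))
    (hhlim : Tendsto (fun k => truncIntegral m' (h k)) atTop (𝓝 0)) :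
    Tendsto (fun k => truncIntegral m' (g k + h k)) atTop (𝓝 0) := by
  refine squeeze_zero (fun k => nonneg hac (add_nonneg (hg k) (hh k)))
    (fun k => add_le hac (hg k) (hh k)) ?_
  simpa using hglim.add hhlim

theorem le_of_forall_le_add (hac' : μ ≪ m') {a b : X →ₘ[μ] ℝ} {g : ℕ → X →ₘ[μ] ℝ}
    (hg : ∀ k, 0 ≤ g k) (hle : ∀ k, a ≤ b + g k)
    (hlim : Tendsto (fun k => truncIntegral m' (g k)) atTop (𝓝 0)) : a ≤ b := by
  have hbound : ∀ k, (a - b)⁺ ≤ g k := fun k => sup_le (sub_le_iff_le_add'.2 (hle k)) (hg k)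
  have hzero : (a - b)⁺ = 0 := eq_zero hac hac' (posPart_nonneg _)
    (ge_of_tendsto' hlim fun k => mono hac (posPart_nonneg _) (hbound k))
  exact sub_nonpos.1 (posPart_eq_zero.1 hzero)

end truncIntegral

namespace NormedL0Module

variable (M : NormedL0Module μ m')

abbrev dist (a b : M.carrier) : ℝ :=
  pd m' M.pn (fun a b => a - b) a b

theorem dist_eq (a b : M.carrier) : M.dist a b = truncIntegral m' (M.pn (a - b)) := rfl

theorem pn_zero : M.pn 0 = 0 := by
  simpa using M.pn_smul 0 0

theorem pn_neg (a : M.carrier) : M.pn (-a) = M.pn a := by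
  have h := M.pn_smul (-1) a
  rwa [neg_one_smul, abs_neg, abs_of_nonneg zero_le_one, one_mul] at h

theorem pn_sub_comm (a b : M.carrier) : M.pn (a - b) = M.pn (b - a) := by
  rw [← neg_sub, pn_neg]

theorem pn_sub_le (a b c : M.carrier) : M.pn (a - c) ≤ M.pn (a - b) + M.pn (b - c) := by
  simpa using M.pn_add_le (a - b) (b - c)

theorem dist_comm (a b : M.carrier) : M.dist a b = M.dist b a := by
  rw [dist_eq, dist_eq, pn_sub_comm]

def closure (s : Set M.carrier) : Set M.carrier :=
  {w | ∀ ε > 0, ∃ y ∈ s, M.dist w y < ε}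

variable {M}

theorem closure_mono {s t : Set M.carrier} (hst : s ⊆ t) : M.closure s ⊆ M.closure t :=
  fun _ hw ε hε => (hw ε hε).imp fun _ ⟨hy, h⟩ => ⟨hst hy, h⟩

section

variable (hac : m' ≪ μ)
include hac

theorem dist_nonneg (a b : M.carrier) : 0 ≤ M.dist a b :=
  truncIntegral.nonneg hac (M.pn_nonneg _)

theorem dist_self (a : M.carrier) : M.dist a a = 0 := by
  rw [dist_eq, sub_self, pn_zero, truncIntegral, integral_eq_zero_of_ae]
  filter_upwards [hac.ae_le (AEEqFun.coeFn_zero (β := ℝ) (μ := μ))] with x hx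
  simp [hx]

theorem subset_closure (s : Set M.carrier) : s ⊆ M.closure s :=
  fun w hw ε hε => ⟨w, hw, by rwa [dist_self hac]⟩

theorem exists_seq_tendsto_of_mem_closure {s : Set M.carrier} {w : M.carrier}
    (hw : w ∈ M.closure s) :
    ∃ y : ℕ → M.carrier, (∀ k, y k ∈ s) ∧ Tendsto (fun k => M.dist w (y k)) atTop (𝓝 0) := by
  choose y hy hdist using fun k : ℕ => hw (1 / (k + 1)) (by positivity)
  exact ⟨y, hy, squeeze_zero' (Eventually.of_forall fun k => dist_nonneg hac _ _)
    (Eventually.of_forall fun k => (hdist k).le) tendsto_one_div_add_atTop_nhds_zero_nat⟩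

variable [IsFiniteMeasure m']

theorem dist_triangle (a b c : M.carrier) : M.dist a c ≤ M.dist a b + M.dist b c :=
  (truncIntegral.mono hac (M.pn_nonneg _) (M.pn_sub_le a b c)).trans
    (truncIntegral.add_le hac (M.pn_nonneg _) (M.pn_nonneg _))

theorem dist_add_add_le (a b c d : M.carrier) :
    M.dist (a + b) (c + d) ≤ M.dist a c + M.dist b d := by
  refine (truncIntegral.mono hac (M.pn_nonneg _) ?_).trans
    (truncIntegral.add_le hac (M.pn_nonneg _) (M.pn_nonneg _))
  simpa [add_sub_add_comm] using M.pn_add_le (a - c) (b - d)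

theorem eq_of_dist_le_zero (hac' : μ ≪ m') {a b : M.carrier} (h : M.dist a b ≤ 0) : a = b :=
  sub_eq_zero.1 (M.pn_eq_zero _ (truncIntegral.eq_zero hac hac' (M.pn_nonneg _) h))

theorem closure_closure_subset (s : Set M.carrier) : M.closure (M.closure s) ⊆ M.closure s := by
  intro w hw ε hε
  obtain ⟨u, hu, hwu⟩ := hw (ε / 2) (half_pos hε)
  obtain ⟨y, hy, huy⟩ := hu (ε / 2) (half_pos hε)
  exact ⟨y, hy, by linarith [dist_triangle hac w u y]⟩

theorem cauchy_of_tendsto {w : M.carrier} {x : ℕ → M.carrier}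
    (h : Tendsto (fun k => M.dist w (x k)) atTop (𝓝 0)) :
    ∀ ε > 0, ∃ K, ∀ n ≥ K, ∀ p ≥ K, M.dist (x n) (x p) < ε := by
  intro ε hε
  obtain ⟨K, hK⟩ := eventually_atTop.1 (h.eventually (gt_mem_nhds (half_pos hε)))
  refine ⟨K, fun n hn p hp => ?_⟩
  linarith [dist_triangle hac (x n) w (x p), dist_comm M (x n) w, hK n hn, hK p hp]

theorem smul_mem_closure {s : Set M.carrier} (hs : ∀ (f : X →ₘ[μ] ℝ), ∀ y ∈ s, f • y ∈ s)
    (f : X →ₘ[μ] ℝ) {w : M.carrier} (hw : w ∈ M.closure s) : f • w ∈ M.closure s := by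
  intro ε hε
  obtain ⟨y, hy, hlim⟩ := exists_seq_tendsto_of_mem_closure hac hw
  have hsmul : Tendsto (fun k => M.dist (f • w) (f • y k)) atTop (𝓝 0) := by
    simpa only [dist_eq, ← smul_sub, M.pn_smul] using
      truncIntegral.tendsto_mul_zero hac (abs_nonneg f) (fun k => M.pn_nonneg _) hlim
  obtain ⟨k, hk⟩ := (hsmul.eventually (gt_mem_nhds hε)).exists
  exact ⟨f • y k, hs f _ (hy k), hk⟩

def closureSubmodule (N : Submodule (X →ₘ[μ] ℝ) M.carrier) :
    Submodule (X →ₘ[μ] ℝ) M.carrier where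
  carrier := M.closure N
  zero_mem' := subset_closure hac _ N.zero_mem
  add_mem' {a b} ha hb ε hε := by
    obtain ⟨y, hy, hay⟩ := ha (ε / 2) (half_pos hε)
    obtain ⟨z, hz, hbz⟩ := hb (ε / 2) (half_pos hε)
    exact ⟨y + z, N.add_mem hy hz, by linarith [dist_add_add_le hac a b y z]⟩
  smul_mem' f _ hw := smul_mem_closure hac (fun f _ hy => N.smul_mem f hy) f hw

theorem small_of_dense_seq (hac' : μ ≪ m') {v : ℕ → M.carrier}
    (hv : ∀ w, ∀ ε > 0, ∃ n, M.dist w (v n) < ε) : Small.{u} M.carrier := by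
  refine small_of_injective (f := fun w n => M.dist w (v n)) fun a b hab => ?_
  refine eq_of_dist_le_zero hac hac' (le_of_forall_pos_lt_add fun ε hε => ?_)
  obtain ⟨n, hn⟩ := hv a (ε / 2) (half_pos hε)
  have hb : M.dist b (v n) = M.dist a (v n) := (congrFun hab n).symm
  linarith [dist_triangle hac a (v n) b, dist_comm M (v n) b]

end

variable (M)

def comap {A : Type*} [AddCommGroup A] [Module (X →ₘ[μ] ℝ) A]
    (f : A →ₗ[X →ₘ[μ] ℝ] M.carrier) (hf : Function.Injective f)
    (hclosed : M.closure (Set.range f) ⊆ Set.range f) : NormedL0Module μ m' where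
  carrier := A
  ag := inferInstance
  mo := inferInstance
  pn a := M.pn (f a)
  pn_nonneg a := M.pn_nonneg (f a)
  pn_add_le a b := by simpa only [map_add] using M.pn_add_le (f a) (f b)
  pn_smul c a := by simpa only [map_smul] using M.pn_smul c (f a)
  pn_eq_zero a ha := hf (by rw [map_zero]; exact M.pn_eq_zero _ ha)
  complete u hu := by
    have hdist (a b : A) :
        pd m' (fun a => M.pn (f a)) (fun a b => a - b) a b = M.dist (f a) (f b) := by
      rw [dist_eq, ← map_sub]; rfl
    simp only [hdist] at hu ⊢
    obtain ⟨l, hl⟩ := M.complete (fun k => f (u k)) hu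
    obtain ⟨a, rfl⟩ := hclosed fun ε hε => (hl.eventually (gt_mem_nhds hε)).exists.elim
      fun k hk => ⟨f (u k), Set.mem_range_self _, by rwa [dist_comm]⟩
    exact ⟨a, hl⟩

end NormedL0Module

def NMHom.ofLinearMap {A B : NormedL0Module μ m'} (f : A.carrier →ₗ[X →ₘ[μ] ℝ] B.carrier)
    (hf : ∀ a, B.pn (f a) ≤ A.pn a) : NMHom A B :=
  ⟨f, f.map_add, f.map_smul, hf⟩

def NMHom.toLinearMap {A B : NormedL0Module μ m'} (F : NMHom A B) :
    A.carrier →ₗ[X →ₘ[μ] ℝ] B.carrier :=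
  ⟨⟨F.toFun, F.map_add'⟩, F.map_smul'⟩

theorem NMHom.map_sub {A B : NormedL0Module μ m'} (F : NMHom A B) (a b : A.carrier) :
    F.toFun (a - b) = F.toFun a - F.toFun b :=
  F.toLinearMap.map_sub a b

namespace NormedL0Module

section SubmoduleSystem

variable (M : NormedL0Module μ m') [Small.{u} M.carrier] {I : Type*}
  (C : I → Submodule (X →ₘ[μ] ℝ) M.carrier)

def shrinkEmbedding (i : I) : Shrink.{u} (C i) →ₗ[X →ₘ[μ] ℝ] M.carrier :=
  (C i).subtype ∘ₗ (Shrink.linearEquiv (X →ₘ[μ] ℝ) (C i)).toLinearMap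

theorem shrinkEmbedding_injective (i : I) : Function.Injective (shrinkEmbedding M C i) :=
  Subtype.val_injective.comp (Shrink.linearEquiv _ _).injective

theorem range_shrinkEmbedding (i : I) : Set.range (shrinkEmbedding M C i) = C i := by
  simp [shrinkEmbedding, Set.range_comp]

variable {M} [Preorder I] {C} (hC : Monotone C)

def shrinkInclusion {i j : I} (h : i ≤ j) : Shrink.{u} (C i) →ₗ[X →ₘ[μ] ℝ] Shrink.{u} (C j) :=
  (Shrink.linearEquiv _ _).symm.toLinearMap ∘ₗ Submodule.inclusion (hC h) ∘ₗ
    (Shrink.linearEquiv _ _).toLinearMap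

theorem shrinkEmbedding_shrinkInclusion {i j : I} (h : i ≤ j) (a : Shrink.{u} (C i)) :
    shrinkEmbedding M C j (shrinkInclusion hC h a) = shrinkEmbedding M C i a := by
  simp [shrinkEmbedding, shrinkInclusion]

variable (hclosed : ∀ i, M.closure (C i) ⊆ C i)

def submoduleSystem : DirSystem μ m' I where
  obj i := M.comap (shrinkEmbedding M C i) (shrinkEmbedding_injective M C i)
    (by rw [range_shrinkEmbedding]; exact hclosed i)
  map i j h := NMHom.ofLinearMap (shrinkInclusion hC h) fun a =>
    (congrArg M.pn (shrinkEmbedding_shrinkInclusion hC h a)).le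
  map_self i a := shrinkEmbedding_injective M C i (shrinkEmbedding_shrinkInclusion hC le_rfl a)
  map_comp i j k hij hjk a := shrinkEmbedding_injective M C k <|
    (shrinkEmbedding_shrinkInclusion hC hjk _).trans <|
      (shrinkEmbedding_shrinkInclusion hC hij a).trans
        (shrinkEmbedding_shrinkInclusion hC (hij.trans hjk) a).symm

def submoduleSystem.ι (i : I) : NMHom ((submoduleSystem hC hclosed).obj i) M :=
  NMHom.ofLinearMap (shrinkEmbedding M C i) fun _ => le_rfl

end SubmoduleSystem

end NormedL0Module

section Extension

variable {M T : NormedL0Module μ m'} (R : Submodule (X →ₘ[μ] ℝ) (M.carrier × T.carrier))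

def limitGraph : Set (M.carrier × T.carrier) :=
  {q | ∀ p ∈ R, T.pn (q.2 - p.2) ≤ M.pn (q.1 - p.1)}

variable {R}

theorem subset_limitGraph (hR : ∀ p ∈ R, T.pn p.2 ≤ M.pn p.1) :
    (R : Set (M.carrier × T.carrier)) ⊆ limitGraph R :=
  fun _ hq _ hp => hR _ (R.sub_mem hq hp)

variable (hac : m' ≪ μ)
include hac

theorem exists_seq_mem_tendsto
    (hdense : ∀ w, w ∈ M.closure (Prod.fst '' (R : Set (M.carrier × T.carrier))))
    (w : M.carrier) :
    ∃ p : ℕ → M.carrier × T.carrier, (∀ k, p k ∈ R) ∧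
      Tendsto (fun k => M.dist w (p k).1) atTop (𝓝 0) := by
  obtain ⟨x, hx, hlim⟩ := NormedL0Module.exists_seq_tendsto_of_mem_closure hac (hdense w)
  choose p hpR hpx using hx
  exact ⟨p, hpR, by simpa only [hpx] using hlim⟩

variable [IsFiniteMeasure m'] (hac' : μ ≪ m')
  (hdense : ∀ w, w ∈ M.closure (Prod.fst '' (R : Set (M.carrier × T.carrier))))
include hac' hdense

theorem limitGraph_unique {w : M.carrier} {t t' : T.carrier} (ht : (w, t) ∈ limitGraph R)
    (ht' : (w, t') ∈ limitGraph R) : t = t' := by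
  obtain ⟨p, hpR, hlim⟩ := exists_seq_mem_tendsto hac hdense w
  have hbound (k : ℕ) : T.pn (t - t') ≤ 0 + 2 * M.pn (w - (p k).1) :=
    calc T.pn (t - t') ≤ T.pn (t - (p k).2) + T.pn (t' - (p k).2) := by
          rw [T.pn_sub_comm t']; exact T.pn_sub_le _ _ _
      _ ≤ M.pn (w - (p k).1) + M.pn (w - (p k).1) := add_le_add (ht _ (hpR k)) (ht' _ (hpR k))
      _ = 0 + 2 * M.pn (w - (p k).1) := by rw [zero_add, two_mul]
  have hle : T.pn (t - t') ≤ 0 := truncIntegral.le_of_forall_le_add hac hac'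
    (fun k => mul_nonneg zero_le_two (M.pn_nonneg _)) hbound
    (truncIntegral.tendsto_mul_zero hac zero_le_two (fun k => M.pn_nonneg _) hlim)
  exact sub_eq_zero.1 (T.pn_eq_zero _ (le_antisymm hle (T.pn_nonneg _)))

theorem add_mem_limitGraph {q q' : M.carrier × T.carrier} (hq : q ∈ limitGraph R)
    (hq' : q' ∈ limitGraph R) : q + q' ∈ limitGraph R := by
  intro p hp
  obtain ⟨p', hp'R, hlim⟩ := exists_seq_mem_tendsto hac hdense q'.1
  have hbound (k : ℕ) : T.pn ((q + q').2 - p.2) ≤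
      M.pn ((q + q').1 - p.1) + 2 * M.pn (q'.1 - (p' k).1) := by
    have hfst : M.pn (q.1 - (p - p' k).1) ≤
        M.pn ((q + q').1 - p.1) + M.pn (q'.1 - (p' k).1) := by
      rw [M.pn_sub_comm q'.1]
      convert M.pn_add_le ((q + q').1 - p.1) ((p' k).1 - q'.1) using 2
      simp only [Prod.fst_add, Prod.fst_sub]; abel
    calc T.pn ((q + q').2 - p.2) ≤ T.pn (q.2 - (p - p' k).2) + T.pn (q'.2 - (p' k).2) := by
          convert T.pn_add_le _ _ using 2
          simp only [Prod.snd_add, Prod.snd_sub]; abel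
      _ ≤ M.pn (q.1 - (p - p' k).1) + M.pn (q'.1 - (p' k).1) :=
          add_le_add (hq _ (R.sub_mem hp (hp'R k))) (hq' _ (hp'R k))
      _ ≤ M.pn ((q + q').1 - p.1) + M.pn (q'.1 - (p' k).1) + M.pn (q'.1 - (p' k).1) := by
          gcongr
      _ = M.pn ((q + q').1 - p.1) + 2 * M.pn (q'.1 - (p' k).1) := by
          rw [two_mul, add_assoc]
  exact truncIntegral.le_of_forall_le_add hac hac'
    (fun k => mul_nonneg zero_le_two (M.pn_nonneg _)) hbound
    (truncIntegral.tendsto_mul_zero hac zero_le_two (fun k => M.pn_nonneg _) hlim)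

theorem smul_mem_limitGraph (hR : ∀ p ∈ R, T.pn p.2 ≤ M.pn p.1) (f : X →ₘ[μ] ℝ)
    {q : M.carrier × T.carrier} (hq : q ∈ limitGraph R) : f • q ∈ limitGraph R := by
  intro p hp
  obtain ⟨p', hp'R, hlim⟩ := exists_seq_mem_tendsto hac hdense q.1
  have h2f : (0 : X →ₘ[μ] ℝ) ≤ 2 * |f| := mul_nonneg zero_le_two (abs_nonneg f)
  have hbound (k : ℕ) : T.pn ((f • q).2 - p.2) ≤
      M.pn ((f • q).1 - p.1) + 2 * |f| * M.pn (q.1 - (p' k).1) := by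
    have hfst : M.pn (f • (p' k).1 - p.1) ≤
        |f| * M.pn (q.1 - (p' k).1) + M.pn (f • q.1 - p.1) := by
      have h := M.pn_sub_le (f • (p' k).1) (f • q.1) p.1
      rwa [← smul_sub, M.pn_smul, M.pn_sub_comm (p' k).1] at h
    calc T.pn ((f • q).2 - p.2) ≤ T.pn (f • (q.2 - (p' k).2)) + T.pn ((f • p' k - p).2) := by
          convert T.pn_add_le _ _ using 2
          simp only [Prod.smul_snd, Prod.snd_sub, smul_sub]; abel
      _ ≤ |f| * M.pn (q.1 - (p' k).1) + M.pn (f • (p' k).1 - p.1) := by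
          rw [T.pn_smul]
          exact add_le_add (mul_le_mul_of_nonneg_left (hq _ (hp'R k)) (abs_nonneg f))
            (hR _ (R.sub_mem (R.smul_mem f (hp'R k)) hp))
      _ ≤ |f| * M.pn (q.1 - (p' k).1) +
            (|f| * M.pn (q.1 - (p' k).1) + M.pn (f • q.1 - p.1)) := by
          gcongr
      _ = M.pn ((f • q).1 - p.1) + 2 * |f| * M.pn (q.1 - (p' k).1) := by
          rw [Prod.smul_fst]; ring
  exact truncIntegral.le_of_forall_le_add hac hac' (fun k => mul_nonneg h2f (M.pn_nonneg _))
    hbound (truncIntegral.tendsto_mul_zero hac h2f (fun k => M.pn_nonneg _) hlim)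

theorem exists_mem_limitGraph (hR : ∀ p ∈ R, T.pn p.2 ≤ M.pn p.1) (w : M.carrier) :
    ∃ t, (w, t) ∈ limitGraph R := by
  obtain ⟨p, hpR, hlim⟩ := exists_seq_mem_tendsto hac hdense w
  have hcauchy : ∀ ε > 0, ∃ K, ∀ n ≥ K, ∀ l ≥ K, T.dist (p n).2 (p l).2 < ε := fun ε hε =>
    (NormedL0Module.cauchy_of_tendsto hac hlim ε hε).imp fun K hK n hn l hl =>
      (truncIntegral.mono hac (T.pn_nonneg _) (hR _ (R.sub_mem (hpR n) (hpR l)))).trans_lt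
        (hK n hn l hl)
  obtain ⟨t, ht⟩ := T.complete (fun k => (p k).2) hcauchy
  have ht' : Tendsto (fun k => T.dist t (p k).2) atTop (𝓝 0) := by
    simpa only [T.dist_comm t] using ht
  refine ⟨t, fun p₀ hp₀ => ?_⟩
  have hbound (k : ℕ) : T.pn (t - p₀.2) ≤
      M.pn (w - p₀.1) + (T.pn (t - (p k).2) + M.pn (w - (p k).1)) :=
    calc T.pn (t - p₀.2) ≤ T.pn (t - (p k).2) + T.pn ((p k).2 - p₀.2) := T.pn_sub_le _ _ _
      _ ≤ T.pn (t - (p k).2) + (M.pn (w - (p k).1) + M.pn (w - p₀.1)) := by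
          rw [M.pn_sub_comm w]
          exact add_le_add le_rfl ((hR _ (R.sub_mem (hpR k) hp₀)).trans (M.pn_sub_le _ _ _))
      _ = M.pn (w - p₀.1) + (T.pn (t - (p k).2) + M.pn (w - (p k).1)) := by abel
  exact truncIntegral.le_of_forall_le_add hac hac'
    (fun k => add_nonneg (T.pn_nonneg _) (M.pn_nonneg _)) hbound
    (truncIntegral.tendsto_add_zero hac (fun k => T.pn_nonneg _) (fun k => M.pn_nonneg _)
      ht' hlim)

theorem NMHom.existsUnique_extension (hR : ∀ p ∈ R, T.pn p.2 ≤ M.pn p.1) :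
    ∃! F : NMHom M T, ∀ p ∈ R, F.toFun p.1 = p.2 := by
  choose F hF using exists_mem_limitGraph hac hac' hdense hR
  have hF_eq {w : M.carrier} {t : T.carrier} (h : (w, t) ∈ limitGraph R) : F w = t :=
    limitGraph_unique hac hac' hdense (hF w) h
  refine ⟨⟨F, fun w w' => hF_eq (add_mem_limitGraph hac hac' hdense (hF w) (hF w')),
    fun f w => hF_eq (smul_mem_limitGraph hac hac' hdense hR f (hF w)),
    fun w => by simpa using hF w 0 R.zero_mem⟩,
    fun p hp => hF_eq (subset_limitGraph hR hp), fun G hG => ?_⟩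
  have hG_mem (w : M.carrier) : (w, G.toFun w) ∈ limitGraph R := fun p hp => by
    rw [← hG p hp, ← G.map_sub]
    exact G.bound' _
  cases G
  simp only [NMHom.mk.injEq]
  exact funext fun w => (hF_eq (hG_mem w)).symm

end Extension

theorem IsDirectLimit.of_dense (hac : m' ≪ μ) (hac' : μ ≪ m') [IsFiniteMeasure m']
    {I : Type*} [Preorder I] [IsDirected I (· ≤ ·)] [Nonempty I] (S : DirSystem μ m' I)
    {M : NormedL0Module μ m'} (ι : ∀ i, NMHom (S.obj i) M)
    (hι : ∀ i j (h : i ≤ j) x, (ι j).toFun ((S.map i j h).toFun x) = (ι i).toFun x)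
    (hiso : ∀ i x, (S.obj i).pn x ≤ M.pn ((ι i).toFun x))
    (hdense : ∀ w, w ∈ M.closure (⋃ i, Set.range (ι i).toFun)) :
    IsDirectLimit S.obj (fun i j h => (S.map i j h).toFun) M ι where
  compat := hι
  universal T ψ hψ := by
    set R : I → Submodule (X →ₘ[μ] ℝ) (M.carrier × T.carrier) :=
      fun i => LinearMap.range ((ι i).toLinearMap.prod (ψ i).toLinearMap)
    have hR : Monotone R := fun i j h _ ⟨x, hx⟩ =>
      ⟨(S.map i j h).toFun x, by rw [← hx]; exact Prod.ext (hι i j h x) (hψ i j h x)⟩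
    have hmem {p : M.carrier × T.carrier} :
        p ∈ ⨆ i, R i ↔ ∃ i x, ((ι i).toFun x, (ψ i).toFun x) = p := by
      rw [Submodule.mem_iSup_of_directed _ hR.directed_le]
      rfl
    obtain ⟨F, hF, huniq⟩ := NMHom.existsUnique_extension hac hac' (R := ⨆ i, R i)
      (fun w => NormedL0Module.closure_mono (by
        rintro _ ⟨_, ⟨i, rfl⟩, x, rfl⟩
        exact ⟨_, hmem.2 ⟨i, x, rfl⟩, rfl⟩) (hdense w))
      (fun p hp => by
        obtain ⟨i, x, rfl⟩ := hmem.1 hp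
        exact ((ψ i).bound' x).trans (hiso i x))
    exact ⟨F, fun i x => hF _ (hmem.2 ⟨i, x, rfl⟩), fun G hG => huniq G fun p hp => by
      obtain ⟨i, x, rfl⟩ := hmem.1 hp
      exact hG i x⟩

/-- A separable normed `L⁰(μ)`-module `M`, with dense sequence
`(v_n)`, is the direct limit of the direct system of the closed submodules `M_n`
generated by `{v_0, …, v_n}`, with inclusions as transition maps. -/
theorem stmt10 {μ m' : Measure X} [IsProbabilityMeasure m'] (hac1 : μ ≪ m')
    (hac2 : m' ≪ μ) (M : NormedL0Module μ m') (v : ℕ → M.carrier)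
    (hdense : ∀ w : M.carrier, ∀ ε > 0, ∃ n, pd m' M.pn (fun a b => a - b) w (v n) < ε) :
    ∃ (S : DirSystem μ m' ℕ) (can : ∀ n, NMHom (S.obj n) M),
      (∀ n : ℕ,
        Function.Injective (can n).toFun ∧
        (∀ x, M.pn ((can n).toFun x) = (S.obj n).pn x) ∧
        Set.range (can n).toFun =
          {w | ∀ ε > 0, ∃ y ∈ Submodule.span (X →ₘ[μ] ℝ) (v '' Set.Iic n),
            pd m' M.pn (fun a b => a - b) w y < ε}) ∧
      IsDirectLimit S.obj (fun i j h => (S.map i j h).toFun) M can := by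
  -- `u_3` is the universe of the objects of `S` in the statement.
  have : Small.{u_3} M.carrier := NormedL0Module.small_of_dense_seq hac2 hac1 hdense
  set C : ℕ → Submodule (X →ₘ[μ] ℝ) M.carrier :=
    fun n => M.closureSubmodule hac2 (Submodule.span _ (v '' Set.Iic n))
  have hC : Monotone C := fun i j h => NormedL0Module.closure_mono
    (Submodule.span_mono (Set.image_mono (Set.Iic_subset_Iic.2 h)))
  have hclosed (n : ℕ) : M.closure (C n) ⊆ C n := NormedL0Module.closure_closure_subset hac2 _
  have hv (n : ℕ) : v n ∈ C n := NormedL0Module.subset_closure hac2 _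
    (Submodule.subset_span ⟨n, Set.self_mem_Iic, rfl⟩)
  have hv_dense (w : M.carrier) : w ∈ M.closure (Set.range v) := fun ε hε =>
    (hdense w ε hε).elim fun n hn => ⟨v n, ⟨n, rfl⟩, hn⟩
  refine ⟨NormedL0Module.submoduleSystem hC hclosed,
    NormedL0Module.submoduleSystem.ι hC hclosed,
    fun n => ⟨M.shrinkEmbedding_injective C n, fun _ => rfl, M.range_shrinkEmbedding C n⟩,
    IsDirectLimit.of_dense hac2 hac1 _ _
      (fun _ _ h => NormedL0Module.shrinkEmbedding_shrinkInclusion hC h) (fun _ _ => le_rfl)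
      fun w => NormedL0Module.closure_mono ?_ (hv_dense w)⟩
  rintro _ ⟨n, rfl⟩
  exact Set.mem_iUnion.2 ⟨n, (M.range_shrinkEmbedding C n).symm ▸ hv n⟩

end
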